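/- arXiv:2102.12119 — 7 statements merged into one kernel-verified Lean document; each statement's English description precedes it below -/
import Mathlib

section
/- Let C be an equi-difference conflict-avoiding code of length L and weight w ≥ 2, split as C = C₁ ∪ C₂ where C₁ is the set of non-exceptional codewords (|d*(I)| = 2w-2) and C₂ = {I₁, ..., I_E} the exceptional ones, and suppose each d(I_i) is a subgroup of Z_L of order p_i with w ≤ p_i < 2w - 1, p_i | L, and gcd(p_i, p_j) = 1 for i ≠ j. Then (2w-2)·|C| ≤ L - 1 + Σᵢ (2w - 1 - p_i). -/
/-- The difference set `d*(I) = {j - i : i, j ∈ I, i ≠ j}` of a subset of `Z_L`. -/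
def dstar {L : ℕ} (I : Finset (ZMod L)) : Finset (ZMod L) :=
  ((I ×ˢ I).filter fun p => p.1 ≠ p.2).image fun p => p.1 - p.2

/-- Counting bound for an equi-difference CAC `C = C₁ ∪ C₂` split into non-exceptional
codewords `C₁` and exceptional codewords `C₂`, where each exceptional codeword `I` has
`d(I)` a subgroup of `Z_L` of order `P I` with `w ≤ P I < 2w - 1`, `P I ∣ L`, and the
orders of distinct exceptional codewords are coprime:
`(2w-2)·|C| ≤ L - 1 + Σ_{I ∈ C₂} (2w - 1 - P I)`. -/
theorem stmt5 (L w : ℕ) [NeZero L] (hw : 2 ≤ w)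
    (C C₁ C₂ : Finset (Finset (ZMod L)))
    (hsplit : C = C₁ ∪ C₂) (hCdisj : Disjoint C₁ C₂)
    (hmem : ∀ I ∈ C, I.card = w ∧
      ∃ g : ZMod L, I = (Finset.range w).image fun k : ℕ => (k : ZMod L) * g)
    (hdisj : ∀ I ∈ C, ∀ J ∈ C, I ≠ J → Disjoint (dstar I) (dstar J))
    (hC₁ : ∀ I ∈ C₁, (dstar I).card = 2 * w - 2)
    (hC₂ : ∀ I ∈ C₂, (dstar I).card < 2 * w - 2)
    (P : Finset (ZMod L) → ℕ)
    (hP : ∀ I ∈ C₂,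
      (∃ H : AddSubgroup (ZMod L),
        ((dstar I ∪ {0} : Finset (ZMod L)) : Set (ZMod L)) = (H : Set (ZMod L))) ∧
      (dstar I ∪ {0}).card = P I ∧ w ≤ P I ∧ P I < 2 * w - 1 ∧ P I ∣ L)
    (hPco : ∀ I ∈ C₂, ∀ J ∈ C₂, I ≠ J → Nat.Coprime (P I) (P J)) :
    (2 * w - 2) * C.card ≤ L - 1 + ∑ I ∈ C₂, (2 * w - 1 - P I) := by
  have h0 : ∀ I : Finset (ZMod L), (0 : ZMod L) ∉ dstar I := by
    intro I h
    simp only [dstar, Finset.mem_image, Finset.mem_filter, Finset.mem_product] at h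
    obtain ⟨⟨a, b⟩, ⟨⟨_, _⟩, hne⟩, hab⟩ := h
    exact hne (sub_eq_zero.mp hab)
  have hsum : ∑ I ∈ C, (dstar I).card ≤ L - 1 := by
    rw [← Finset.card_biUnion (fun I hI J hJ hne => hdisj I hI J hJ hne)]
    calc (C.biUnion fun I => dstar I).card
        ≤ (Finset.univ.erase (0 : ZMod L)).card := by
          apply Finset.card_le_card
          intro x hx
          simp only [Finset.mem_biUnion] at hx
          obtain ⟨I, hI, hxI⟩ := hx
          refine Finset.mem_erase.mpr ⟨?_, Finset.mem_univ x⟩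
          rintro rfl; exact h0 I hxI
      _ = L - 1 := by rw [Finset.card_erase_of_mem (Finset.mem_univ _), Finset.card_univ, ZMod.card]
  have hC₂c : ∀ I ∈ C₂, (dstar I).card + 1 = P I := by
    intro I hI
    obtain ⟨_, hcard, _⟩ := hP I hI
    have : (dstar I ∪ {0}).card = (dstar I).card + 1 := by
      rw [Finset.union_comm]
      have : ({0} ∪ dstar I : Finset (ZMod L)) = insert 0 (dstar I) := rfl
      rw [this, Finset.card_insert_of_notMem (h0 I)]
    omega
  calc (2 * w - 2) * C.card = ∑ _I ∈ C, (2 * w - 2) := by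
        rw [Finset.sum_const, smul_eq_mul, mul_comm]
    _ = ∑ I ∈ C₁, (2 * w - 2) + ∑ I ∈ C₂, (2 * w - 2) := by
        rw [hsplit, Finset.sum_union hCdisj]
    _ = ∑ I ∈ C₁, (dstar I).card + ∑ I ∈ C₂, ((dstar I).card + (2 * w - 1 - P I)) := by
        congr 1
        · exact Finset.sum_congr rfl fun I hI => (hC₁ I hI).symm
        · refine Finset.sum_congr rfl fun I hI => ?_
          have h1 := hC₂c I hI
          obtain ⟨_, _, hw1, hw2, _⟩ := hP I hI
          omega
    _ = ∑ I ∈ C, (dstar I).card + ∑ I ∈ C₂, (2 * w - 1 - P I) := by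
        rw [hsplit, Finset.sum_union hCdisj, Finset.sum_add_distrib]
        ring
    _ ≤ L - 1 + ∑ I ∈ C₂, (2 * w - 1 - P I) := Nat.add_le_add_right hsum _
end

section
/- Let p = 2(w-1)ms + 1 be prime, α a primitive root mod p, g = α^{s(w-1)}, N₁ = ⟨g⟩ ≤ Z_p* of order 2m, and H = ⟨α^s⟩ ≤ Z_p* of order 2m(w-1). Suppose {1, 2, ..., w-1} is a system of distinct representatives of the cosets of N₁ in H (i.e., H is the disjoint union of the cosets j·N₁ for j = 1, ..., w-1). Let A = {±1, ±2, ..., ±(w-1)} ⊆ Z_p*. Then Z_p* is the disjoint union of the sets α^i · g^j · A over 0 ≤ i ≤ s-1, 0 ≤ j ≤ m-1. -/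
/-- Let `p = 2(w-1)ms + 1` be prime, `α` a primitive root mod `p`, `g = α^{s(w-1)}`,
`N₁ = ⟨g⟩` of order `2m` and `H = ⟨α^s⟩` of order `2m(w-1)`. If `{1, ..., w-1}` is a
system of distinct representatives of the cosets of `N₁` in `H`, then with
`A = {±1, ..., ±(w-1)}`, the group `Z_p*` is the disjoint union of the sets
`α^i g^j A` for `0 ≤ i ≤ s-1`, `0 ≤ j ≤ m-1`. -/
theorem stmt7 (p w m s : ℕ) [Fact p.Prime] (hw : 2 ≤ w) (hm : 1 ≤ m) (hs : 1 ≤ s)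
    (hp : p = 2 * (w - 1) * m * s + 1)
    (α : ZMod p) (hα : orderOf α = p - 1)
    (g : ZMod p) (hg : g = α ^ (s * (w - 1)))
    (hordN : orderOf g = 2 * m) (hordH : orderOf (α ^ s) = 2 * m * (w - 1))
    (hSDRcover : ((Submonoid.powers (α ^ s) : Submonoid (ZMod p)) : Set (ZMod p)) =
      ⋃ j ∈ Set.Icc 1 (w - 1), (fun x => (j : ZMod p) * x) ''
        ((Submonoid.powers g : Submonoid (ZMod p)) : Set (ZMod p)))
    (hSDRdisj : ∀ j₁ ∈ Set.Icc 1 (w - 1), ∀ j₂ ∈ Set.Icc 1 (w - 1), j₁ ≠ j₂ →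
      Disjoint
        ((fun x => (j₁ : ZMod p) * x) ''
          ((Submonoid.powers g : Submonoid (ZMod p)) : Set (ZMod p)))
        ((fun x => (j₂ : ZMod p) * x) ''
          ((Submonoid.powers g : Submonoid (ZMod p)) : Set (ZMod p))))
    (A : Set (ZMod p))
    (hA : A = {x : ZMod p | ∃ k : ℕ, 1 ≤ k ∧ k ≤ w - 1 ∧ (x = (k : ZMod p) ∨ x = -(k : ZMod p))}) :
    ({x : ZMod p | x ≠ 0} =
      ⋃ i ∈ Set.Ico 0 s, ⋃ j ∈ Set.Ico 0 m, (fun x => α ^ i * g ^ j * x) '' A) ∧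
    (∀ i₁ ∈ Set.Ico 0 s, ∀ j₁ ∈ Set.Ico 0 m, ∀ i₂ ∈ Set.Ico 0 s, ∀ j₂ ∈ Set.Ico 0 m,
      (i₁, j₁) ≠ (i₂, j₂) →
      Disjoint ((fun x => α ^ i₁ * g ^ j₁ * x) '' A) ((fun x => α ^ i₂ * g ^ j₂ * x) '' A)) := by
  have hpprime : p.Prime := Fact.out
  have hp1 : p - 1 = 2 * (w - 1) * m * s := by omega
  have hp1pos : 0 < p - 1 := by
    have : 1 ≤ 2 * (w - 1) * m * s := by
      have h1 : 1 ≤ w - 1 := by omega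
      calc 1 ≤ 1 * 1 * 1 * 1 := by norm_num
        _ ≤ 2 * (w - 1) * m * s := by
          apply Nat.mul_le_mul (Nat.mul_le_mul (Nat.mul_le_mul (by omega) h1) hm) hs
    omega
  have hwp : w - 1 < p := by
    have : w - 1 ≤ 2 * (w - 1) * m * s := by
      calc w - 1 = 1 * (w - 1) * 1 * 1 := by ring
        _ ≤ 2 * (w - 1) * m * s := by
          apply Nat.mul_le_mul (Nat.mul_le_mul (Nat.mul_le_mul (by omega) le_rfl) hm) hs
    omega
  -- α ≠ 0
  have hα0 : α ≠ 0 := by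
    intro h
    have h1 : α ^ (p - 1) = 1 := hα ▸ pow_orderOf_eq_one α
    rw [h, zero_pow (by omega)] at h1
    exact zero_ne_one h1
  have hg0 : g ≠ 0 := by rw [hg]; exact pow_ne_zero _ hα0
  -- units
  set αu : (ZMod p)ˣ := (isUnit_iff_ne_zero.mpr hα0).unit with hαudef
  have hαu : (αu : ZMod p) = α := (isUnit_iff_ne_zero.mpr hα0).unit_spec
  have hordαu : orderOf αu = p - 1 := by rw [← orderOf_units, hαu, hα]
  set gu : (ZMod p)ˣ := (isUnit_iff_ne_zero.mpr hg0).unit with hgudef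
  have hgu : (gu : ZMod p) = g := (isUnit_iff_ne_zero.mpr hg0).unit_spec
  have hordgu : orderOf gu = 2 * m := by rw [← orderOf_units, hgu, hordN]
  -- exponent equality lemmas
  have pe : ∀ u v : ℕ, α ^ u = α ^ v → u % (p - 1) = v % (p - 1) := by
    intro u v h
    have : αu ^ u = αu ^ v := by
      apply Units.ext
      rw [Units.val_pow_eq_pow_val, Units.val_pow_eq_pow_val, hαu]; exact h
    have := pow_eq_pow_iff_modEq.mp this
    rwa [hordαu] at this
  have peg : ∀ u v : ℕ, g ^ u = g ^ v → u % (2 * m) = v % (2 * m) := by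
    intro u v h
    have : gu ^ u = gu ^ v := by
      apply Units.ext
      rw [Units.val_pow_eq_pow_val, Units.val_pow_eq_pow_val, hgu]; exact h
    have := pow_eq_pow_iff_modEq.mp this
    rwa [hordgu] at this
  -- g^m = -1
  have hgm : g ^ m = -1 := by
    have h2 : g ^ m * g ^ m = 1 := by
      rw [← pow_add]
      have : m + m = 2 * m := by ring
      rw [this, ← hordN, pow_orderOf_eq_one]
    rcases mul_self_eq_one_iff.mp h2 with h | h
    · exfalso
      have := orderOf_dvd_of_pow_eq_one h
      rw [hordN] at this
      have := Nat.le_of_dvd (by omega) this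
      omega
    · exact h
  have hgneg : ∀ j : ℕ, -(g ^ j) = g ^ (j + m) := by
    intro j
    rw [pow_add, hgm, mul_neg_one]
  -- casts of k are nonzero
  have hk0 : ∀ k : ℕ, 1 ≤ k → k ≤ w - 1 → (k : ZMod p) ≠ 0 := by
    intro k h1 h2 h
    rw [ZMod.natCast_eq_zero_iff] at h
    have := Nat.le_of_dvd (by omega) h
    omega
  -- k is a power of α^s
  have hkpow : ∀ k : ℕ, 1 ≤ k → k ≤ w - 1 → ∃ c : ℕ, (k : ZMod p) = α ^ (s * c) := by
    intro k h1 h2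
    have hmem : (k : ZMod p) ∈
        ((Submonoid.powers (α ^ s) : Submonoid (ZMod p)) : Set (ZMod p)) := by
      rw [hSDRcover]
      apply Set.mem_biUnion (Set.mem_Icc.mpr ⟨h1, h2⟩)
      exact ⟨1, ⟨0, by simp⟩, by simp⟩
    obtain ⟨c, hc⟩ := hmem
    refine ⟨c, ?_⟩
    rw [pow_mul]
    exact hc.symm
  -- every nonzero x is a power of α
  have hgen : ∀ x : ZMod p, x ≠ 0 → ∃ n : ℕ, x = α ^ n := by
    intro x hx
    set xu : (ZMod p)ˣ := (isUnit_iff_ne_zero.mpr hx).unit with hxudef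
    have hxu : (xu : ZMod p) = x := (isUnit_iff_ne_zero.mpr hx).unit_spec
    have hcard : Nat.card (ZMod p)ˣ = p - 1 := by
      rw [Nat.card_eq_fintype_card, ZMod.card_units_eq_totient, Nat.totient_prime hpprime]
    have htop : Subgroup.zpowers αu = ⊤ := by
      apply Subgroup.eq_top_of_card_eq
      rw [Nat.card_zpowers, hordαu, hcard]
    have : xu ∈ Subgroup.zpowers αu := htop ▸ Subgroup.mem_top xu
    have : xu ∈ Submonoid.powers αu := mem_powers_iff_mem_zpowers.mpr this
    obtain ⟨n, hn⟩ := this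
    refine ⟨n, ?_⟩
    rw [← hxu, ← hn, Units.val_pow_eq_pow_val, hαu]
  -- every element of the images: x = α^i * (k * g^d) with d < 2m, d % m = j
  constructor
  · ext x
    simp only [Set.mem_setOf_eq, Set.mem_iUnion, Set.mem_image, Set.mem_Ico]
    constructor
    · intro hx
      obtain ⟨n, hn⟩ := hgen x hx
      have hdecomp : x = α ^ (n % s) * (α ^ s) ^ (n / s) := by
        rw [hn, ← pow_mul, ← pow_add]
        congr 1
        exact (Nat.mod_add_div n s).symm
      have hmem : (α ^ s) ^ (n / s) ∈
          ((Submonoid.powers (α ^ s) : Submonoid (ZMod p)) : Set (ZMod p)) :=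
        ⟨n / s, rfl⟩
      rw [hSDRcover] at hmem
      obtain ⟨k, hk, y, ⟨t, hty⟩, hky⟩ := by
        simpa only [Set.mem_iUnion, Set.mem_image, SetLike.mem_coe] using hmem
      have hty' : g ^ t = y := hty
      rw [Set.mem_Icc] at hk
      have hgt : g ^ t = g ^ (t % (2 * m)) := by
        rw [← hordN]; exact (pow_mod_orderOf g t).symm
      set t' := t % (2 * m) with ht'
      have ht'lt : t' < 2 * m := Nat.mod_lt _ (by omega)
      rcases lt_or_ge t' m with hcase | hcase
      · refine ⟨n % s, ⟨Nat.zero_le _, Nat.mod_lt _ (by omega)⟩, t',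
          ⟨Nat.zero_le _, hcase⟩, (k : ZMod p), ?_, ?_⟩
        · rw [hA]; exact ⟨k, hk.1, hk.2, Or.inl rfl⟩
        · rw [hdecomp, ← hky, ← hty', hgt]; ring
      · refine ⟨n % s, ⟨Nat.zero_le _, Nat.mod_lt _ (by omega)⟩, t' - m,
          ⟨Nat.zero_le _, by omega⟩, -(k : ZMod p), ?_, ?_⟩
        · rw [hA]; exact ⟨k, hk.1, hk.2, Or.inr rfl⟩
        · have : g ^ t' = -(g ^ (t' - m)) := by
            rw [hgneg, Nat.sub_add_cancel hcase]
          rw [hdecomp, ← hky, ← hty', hgt, this]; ring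
    · rintro ⟨i, hi, j, hj, a, ha, hx⟩
      rw [hA] at ha
      obtain ⟨k, hk1, hk2, hcase⟩ := ha
      have hka : a ≠ 0 := by
        rcases hcase with h | h <;> rw [h]
        · exact hk0 k hk1 hk2
        · exact neg_ne_zero.mpr (hk0 k hk1 hk2)
      rw [← hx]
      exact mul_ne_zero (mul_ne_zero (pow_ne_zero _ hα0) (pow_ne_zero _ hg0)) hka
  · intro i₁ hi₁ j₁ hj₁ i₂ hi₂ j₂ hj₂ hne
    rw [Set.mem_Ico] at hi₁ hj₁ hi₂ hj₂
    rw [Set.disjoint_left]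
    rintro x ⟨a₁, ha₁, hx₁⟩ ⟨a₂, ha₂, hx₂⟩
    have hx₁' : α ^ i₁ * g ^ j₁ * a₁ = x := hx₁
    have hx₂' : α ^ i₂ * g ^ j₂ * a₂ = x := hx₂
    rw [hA] at ha₁ ha₂
    obtain ⟨k₁, hk₁1, hk₁2, hc₁⟩ := ha₁
    obtain ⟨k₂, hk₂1, hk₂2, hc₂⟩ := ha₂
    -- normal form: x = α^iₗ * ((kₗ : ZMod p) * g ^ dₗ), dₗ < 2m, dₗ % m = jₗ
    have norm : ∀ (i j : ℕ) (k : ℕ) (a : ZMod p), j < m →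
        (a = (k : ZMod p) ∨ a = -(k : ZMod p)) →
        ∃ d : ℕ, d < 2 * m ∧ d % m = j ∧ α ^ i * g ^ j * a = α ^ i * ((k : ZMod p) * g ^ d) := by
      intro i j k a hjm hcase
      rcases hcase with h | h
      · exact ⟨j, by omega, Nat.mod_eq_of_lt hjm, by rw [h]; ring⟩
      · refine ⟨j + m, by omega, ?_, ?_⟩
        · rw [Nat.add_mod_right, Nat.mod_eq_of_lt hjm]
        · rw [h, ← hgneg]; ring
    obtain ⟨d₁, hd₁, hd₁j, he₁⟩ := norm i₁ j₁ k₁ a₁ hj₁.2 hc₁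
    obtain ⟨d₂, hd₂, hd₂j, he₂⟩ := norm i₂ j₂ k₂ a₂ hj₂.2 hc₂
    have hxx : α ^ i₁ * ((k₁ : ZMod p) * g ^ d₁) = α ^ i₂ * ((k₂ : ZMod p) * g ^ d₂) := by
      rw [← he₁, ← he₂, hx₁', hx₂']
    -- first: i₁ = i₂
    obtain ⟨c₁, hcc₁⟩ := hkpow k₁ hk₁1 hk₁2
    obtain ⟨c₂, hcc₂⟩ := hkpow k₂ hk₂1 hk₂2
    have hEE : α ^ (i₁ + s * c₁ + s * (w - 1) * d₁) = α ^ (i₂ + s * c₂ + s * (w - 1) * d₂) := by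
      have e1 : α ^ (i₁ + s * c₁ + s * (w - 1) * d₁)
          = α ^ i₁ * ((k₁ : ZMod p) * g ^ d₁) := by
        rw [hcc₁, hg, ← pow_mul, ← pow_add, ← pow_add, ← add_assoc]
      have e2 : α ^ (i₂ + s * c₂ + s * (w - 1) * d₂)
          = α ^ i₂ * ((k₂ : ZMod p) * g ^ d₂) := by
        rw [hcc₂, hg, ← pow_mul, ← pow_add, ← pow_add, ← add_assoc]
      rw [e1, e2, hxx]
    have hmod := pe _ _ hEE
    have hsdvd : s ∣ p - 1 := ⟨2 * (w - 1) * m, by rw [hp1]; ring⟩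
    have hmods : (i₁ + s * c₁ + s * (w - 1) * d₁) % s = (i₂ + s * c₂ + s * (w - 1) * d₂) % s :=
      Nat.ModEq.of_dvd hsdvd hmod
    have hii : i₁ = i₂ := by
      have r1 : (i₁ + s * c₁ + s * (w - 1) * d₁) % s = i₁ % s := by
        have : i₁ + s * c₁ + s * (w - 1) * d₁ = i₁ + s * (c₁ + (w - 1) * d₁) := by ring
        rw [this, Nat.add_mul_mod_self_left]
      have r2 : (i₂ + s * c₂ + s * (w - 1) * d₂) % s = i₂ % s := by
        have : i₂ + s * c₂ + s * (w - 1) * d₂ = i₂ + s * (c₂ + (w - 1) * d₂) := by ring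
        rw [this, Nat.add_mul_mod_self_left]
      rw [r1, r2, Nat.mod_eq_of_lt hi₁.2, Nat.mod_eq_of_lt hi₂.2] at hmods
      exact hmods
    have hjj : j₁ ≠ j₂ := by
      intro h; exact hne (by rw [hii, h])
    -- cancel α^i₁
    have hcan : (k₁ : ZMod p) * g ^ d₁ = (k₂ : ZMod p) * g ^ d₂ := by
      have := hxx
      rw [← hii] at this
      exact mul_left_cancel₀ (pow_ne_zero _ hα0) this
    by_cases hkk : k₁ = k₂
    · subst hkk
      have : g ^ d₁ = g ^ d₂ := mul_left_cancel₀ (hk0 k₁ hk₁1 hk₁2) hcan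
      have := peg _ _ this
      rw [Nat.mod_eq_of_lt hd₁, Nat.mod_eq_of_lt hd₂] at this
      subst this
      exact hjj (by rw [← hd₁j, ← hd₂j])
    · have hdisj := hSDRdisj k₁ (Set.mem_Icc.mpr ⟨hk₁1, hk₁2⟩)
        k₂ (Set.mem_Icc.mpr ⟨hk₂1, hk₂2⟩) hkk
      rw [Set.disjoint_left] at hdisj
      exact hdisj ⟨g ^ d₁, ⟨d₁, rfl⟩, rfl⟩ ⟨g ^ d₂, ⟨d₂, rfl⟩, hcan.symm⟩
end

section
/- Let p = 2(w-1)ms + 1 be prime with w ≥ 2, α a primitive root mod p, g = α^{s(w-1)}, and suppose {1, 2, ..., w-1} forms a system of distinct representatives of the cosets of ⟨g⟩ in ⟨α^s⟩. For 0 ≤ i ≤ s-1, 0 ≤ j ≤ m-1, let I_{(i,j)} = {0, α^i g^j, 2α^i g^j, ..., (w-1)α^i g^j} ⊆ Z_p. Then the sm codewords I_{(i,j)} form an equi-difference conflict-avoiding code of length p and weight w (pairwise disjoint difference sets), each codeword has exactly w elements, and the union of all difference sets d*(I_{(i,j)}) equals Z_p \ {0}. -/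
/-- Let `p = 2(w-1)ms + 1` be prime, `α` a primitive root mod `p`, `g = α^{s(w-1)}`, and
suppose `{1,...,w-1}` is an SDR of the cosets of `⟨g⟩` in `⟨α^s⟩`. Then the `sm` codewords
`I_{(i,j)} = {0, α^i g^j, ..., (w-1) α^i g^j}` (for `i < s`, `j < m`) each have `w` elements,
have pairwise disjoint difference sets (so they form an equi-difference CAC of length `p`
and weight `w`), and their difference sets cover `Z_p \ {0}`. -/
theorem stmt8 (p w m s : ℕ) [Fact p.Prime] (hw : 2 ≤ w) (hm : 1 ≤ m) (hs : 1 ≤ s)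
    (hp : p = 2 * (w - 1) * m * s + 1)
    (α : ZMod p) (hα : orderOf α = p - 1)
    (g : ZMod p) (hg : g = α ^ (s * (w - 1)))
    (hSDRcover : ((Submonoid.powers (α ^ s) : Submonoid (ZMod p)) : Set (ZMod p)) =
      ⋃ j ∈ Set.Icc 1 (w - 1), (fun x => (j : ZMod p) * x) ''
        ((Submonoid.powers g : Submonoid (ZMod p)) : Set (ZMod p)))
    (hSDRdisj : ∀ j₁ ∈ Set.Icc 1 (w - 1), ∀ j₂ ∈ Set.Icc 1 (w - 1), j₁ ≠ j₂ →
      Disjoint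
        ((fun x => (j₁ : ZMod p) * x) ''
          ((Submonoid.powers g : Submonoid (ZMod p)) : Set (ZMod p)))
        ((fun x => (j₂ : ZMod p) * x) ''
          ((Submonoid.powers g : Submonoid (ZMod p)) : Set (ZMod p))))
    (I : ℕ → ℕ → Finset (ZMod p))
    (hI : ∀ i j, I i j = (Finset.range w).image fun k : ℕ => (k : ZMod p) * (α ^ i * g ^ j)) :
    (∀ i < s, ∀ j < m, (I i j).card = w) ∧
    (∀ i₁ < s, ∀ j₁ < m, ∀ i₂ < s, ∀ j₂ < m, (i₁, j₁) ≠ (i₂, j₂) →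
      Disjoint (dstar (I i₁ j₁)) (dstar (I i₂ j₂))) ∧
    ((Finset.range s ×ˢ Finset.range m).biUnion (fun q => dstar (I q.1 q.2)) =
      Finset.univ \ {0}) := by
  classical
  have hp1 : p - 1 = 2 * (w - 1) * m * s := by omega
  have hms : 1 ≤ m * s := by
    have := Nat.mul_le_mul hm hs; simpa using this
  have h2wp : 2 * (w - 1) < p := by
    have h := Nat.mul_le_mul_left (2 * (w - 1)) hms
    rw [hp, mul_assoc]
    have hw1 : 1 ≤ w - 1 := by omega
    simp only [mul_one] at h
    omega
  have hwp : w - 1 < p := by omega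
  have hNpos : 1 ≤ (w - 1) * m * s := by
    have := Nat.mul_le_mul (Nat.mul_le_mul (show 1 ≤ w - 1 by omega) hm) hs
    simpa using this
  have hα0 : α ≠ 0 := by
    intro h0
    have h1 : α ^ (p - 1) = 1 := by rw [← hα]; exact pow_orderOf_eq_one α
    rw [h0, zero_pow (by omega : p - 1 ≠ 0)] at h1
    exact zero_ne_one h1
  have hg0 : g ≠ 0 := by rw [hg]; exact pow_ne_zero _ hα0
  have hαN : α ^ ((w - 1) * m * s) = -1 := by
    have h2 : (α ^ ((w - 1) * m * s)) ^ 2 = 1 := by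
      rw [← pow_mul]
      have he : (w - 1) * m * s * 2 = p - 1 := by rw [hp1]; ring
      rw [he, ← hα, pow_orderOf_eq_one]
    rcases sq_eq_one_iff.mp h2 with h1 | h1
    · exfalso
      have hd := orderOf_dvd_of_pow_eq_one h1
      rw [hα, hp1] at hd
      have he : 2 * (w - 1) * m * s = 2 * ((w - 1) * m * s) := by ring
      rw [he] at hd
      have := Nat.le_of_dvd (by omega) hd
      omega
    · exact h1
  have hgm : g ^ m = -1 := by
    rw [hg, ← pow_mul]
    have he : s * (w - 1) * m = (w - 1) * m * s := by ring
    rw [he, hαN]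
  have horderg : orderOf g = 2 * m := by
    rw [hg, orderOf_pow' α (Nat.mul_ne_zero (by omega) (by omega)), hα, hp1]
    have hd : Nat.gcd (2 * (w - 1) * m * s) (s * (w - 1)) = s * (w - 1) :=
      Nat.gcd_eq_right ⟨2 * m, by ring⟩
    rw [hd]
    have he : 2 * (w - 1) * m * s = 2 * m * (s * (w - 1)) := by ring
    rw [he, Nat.mul_div_cancel _ (Nat.mul_pos (by omega) (by omega))]
  have hcast0 : ∀ c : ℤ, c.natAbs < p → (c : ZMod p) = 0 → c = 0 := by
    intro c hc h0
    rw [ZMod.intCast_zmod_eq_zero_iff_dvd] at h0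
    by_contra hne
    have h1 : (p : ℤ).natAbs ∣ c.natAbs := Int.natAbs_dvd_natAbs.mpr h0
    simp only [Int.natAbs_natCast] at h1
    have := Nat.le_of_dvd (Int.natAbs_pos.mpr hne) h1
    omega
  have hkne : ∀ k : ℕ, 1 ≤ k → k ≤ w - 1 → (k : ZMod p) ≠ 0 := by
    intro k h1 h2 h0
    have h3 : ((k : ℤ) : ZMod p) = 0 := by exact_mod_cast h0
    have h4 := hcast0 (k : ℤ) (by simpa using lt_of_le_of_lt h2 hwp) h3
    omega
  have hcne : ∀ c : ℤ, c ≠ 0 → c.natAbs ≤ w - 1 → (c : ZMod p) ≠ 0 := by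
    intro c hc hb h0
    exact hc (hcast0 c (lt_of_le_of_lt hb hwp) h0)
  have hsign : ∀ c : ℤ, c ≠ 0 → ∃ e : ℕ, e ≤ 1 ∧
      (c : ZMod p) = g ^ (m * e) * (c.natAbs : ZMod p) := by
    intro c hc
    rcases lt_or_gt_of_ne hc with hneg | hpos
    · refine ⟨1, le_refl 1, ?_⟩
      rw [mul_one, hgm]
      have h1 : ((c.natAbs : ℕ) : ZMod p) = -(c : ZMod p) := by
        have he : ((c.natAbs : ℕ) : ℤ) = -c := by omega
        calc ((c.natAbs : ℕ) : ZMod p) = (((c.natAbs : ℕ) : ℤ) : ZMod p) := (Int.cast_natCast c.natAbs).symm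
          _ = ((-c : ℤ) : ZMod p) := by rw [he]
          _ = -(c : ZMod p) := by push_cast; ring
      rw [h1]; ring
    · refine ⟨0, by omega, ?_⟩
      rw [mul_zero, pow_zero, one_mul]
      have h1 : ((c.natAbs : ℕ) : ZMod p) = (c : ZMod p) := by
        have he : ((c.natAbs : ℕ) : ℤ) = c := by omega
        calc ((c.natAbs : ℕ) : ZMod p) = (((c.natAbs : ℕ) : ℤ) : ZMod p) := (Int.cast_natCast c.natAbs).symm
          _ = ((c : ℤ) : ZMod p) := by rw [he]
          _ = (c : ZMod p) := rfl
      exact h1.symm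
  have hpowmod : ∀ x : ZMod p, x ≠ 0 → ∀ a b : ℕ, x ^ a = x ^ b →
      a ≡ b [MOD orderOf x] := by
    intro x hx a b hab
    have hu : IsUnit x := isUnit_iff_ne_zero.mpr hx
    have h1 : hu.unit ^ a = hu.unit ^ b := Units.ext (by
      simp only [Units.val_pow_eq_pow_val, IsUnit.unit_spec]
      exact hab)
    have h2 := pow_eq_pow_iff_modEq.mp h1
    have h3 : orderOf hu.unit = orderOf x := by rw [← orderOf_units, hu.unit_spec]
    rwa [h3] at h2
  have hcoset : ∀ k1 k2 : ℕ, 1 ≤ k1 → k1 ≤ w - 1 → 1 ≤ k2 → k2 ≤ w - 1 →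
      ∀ a b : ℕ, (k1 : ZMod p) * g ^ a = (k2 : ZMod p) * g ^ b → k1 = k2 := by
    intro k1 k2 h11 h12 h21 h22 a b heq
    by_contra hne
    have hd := hSDRdisj k1 ⟨h11, h12⟩ k2 ⟨h21, h22⟩ hne
    rw [Set.disjoint_left] at hd
    exact hd ⟨g ^ a, ⟨a, rfl⟩, rfl⟩ ⟨g ^ b, ⟨b, rfl⟩, heq.symm⟩
  have hkpow : ∀ k : ℕ, 1 ≤ k → k ≤ w - 1 → ∃ t, (k : ZMod p) = α ^ (s * t) := by
    intro k h1 h2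
    have hk : (k : ZMod p) ∈
        ((Submonoid.powers (α ^ s) : Submonoid (ZMod p)) : Set (ZMod p)) := by
      rw [hSDRcover]
      exact Set.mem_biUnion (show k ∈ Set.Icc 1 (w - 1) from ⟨h1, h2⟩)
        ⟨1, ⟨0, pow_zero g⟩, mul_one _⟩
    obtain ⟨t, ht⟩ := hk
    simp only at ht
    exact ⟨t, by rw [← ht, ← pow_mul]⟩
  -- Key lemma: equality of weighted elements forces equal indices.
  have hkey : ∀ (i1 j1 i2 j2 : ℕ) (c1 c2 : ℤ), i1 < s → j1 < m → i2 < s → j2 < m →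
      c1 ≠ 0 → c2 ≠ 0 → c1.natAbs ≤ w - 1 → c2.natAbs ≤ w - 1 →
      (c1 : ZMod p) * (α ^ i1 * g ^ j1) = (c2 : ZMod p) * (α ^ i2 * g ^ j2) →
      i1 = i2 ∧ j1 = j2 := by
    intro i1 j1 i2 j2 c1 c2 hi1 hj1 hi2 hj2 hc1 hc2 hb1 hb2 heq
    obtain ⟨e1, he1, hs1⟩ := hsign c1 hc1
    obtain ⟨e2, he2, hs2⟩ := hsign c2 hc2
    set k1 := c1.natAbs with hk1def
    set k2 := c2.natAbs with hk2def
    have hk11 : 1 ≤ k1 := Int.natAbs_pos.mpr hc1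
    have hk21 : 1 ≤ k2 := Int.natAbs_pos.mpr hc2
    have hmain : (k1 : ZMod p) * (α ^ i1 * g ^ (m * e1 + j1)) =
        (k2 : ZMod p) * (α ^ i2 * g ^ (m * e2 + j2)) := by
      rw [pow_add, pow_add]
      rw [hs1, hs2] at heq
      linear_combination heq
    have hi : i1 = i2 := by
      obtain ⟨t1, ht1⟩ := hkpow k1 hk11 hb1
      obtain ⟨t2, ht2⟩ := hkpow k2 hk21 hb2
      rw [ht1, ht2, hg, ← pow_mul, ← pow_mul, ← pow_add, ← pow_add, ← pow_add,
        ← pow_add] at hmain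
      have hmod := hpowmod α hα0 _ _ hmain
      rw [hα, hp1] at hmod
      have hdvd : s ∣ 2 * (w - 1) * m * s := ⟨2 * (w - 1) * m, by ring⟩
      have h3 := hmod.of_dvd hdvd
      have e1' : s * t1 + (i1 + s * (w - 1) * (m * e1 + j1)) =
          i1 + s * (t1 + (w - 1) * (m * e1 + j1)) := by ring
      have e2' : s * t2 + (i2 + s * (w - 1) * (m * e2 + j2)) =
          i2 + s * (t2 + (w - 1) * (m * e2 + j2)) := by ring
      rw [e1', e2'] at h3
      have h4 : (i1 + s * (t1 + (w - 1) * (m * e1 + j1))) % s =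
          (i2 + s * (t2 + (w - 1) * (m * e2 + j2))) % s := h3
      rw [Nat.add_mul_mod_self_left, Nat.add_mul_mod_self_left,
        Nat.mod_eq_of_lt hi1, Nat.mod_eq_of_lt hi2] at h4
      exact h4
    subst hi
    refine ⟨rfl, ?_⟩
    have hcancel : (k1 : ZMod p) * g ^ (m * e1 + j1) = (k2 : ZMod p) * g ^ (m * e2 + j2) := by
      have hα1 : (α : ZMod p) ^ i1 ≠ 0 := pow_ne_zero _ hα0
      apply mul_right_cancel₀ hα1
      linear_combination hmain
    have hk12 : k1 = k2 := hcoset k1 k2 hk11 hb1 hk21 hb2 _ _ hcancel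
    rw [← hk12] at hcancel
    have hgeq : g ^ (m * e1 + j1) = g ^ (m * e2 + j2) :=
      mul_left_cancel₀ (hkne k1 hk11 hb1) hcancel
    have h5 := hpowmod g hg0 _ _ hgeq
    rw [horderg] at h5
    have hA1 : m * e1 + j1 < 2 * m := by interval_cases e1 <;> omega
    have hA2 : m * e2 + j2 < 2 * m := by interval_cases e2 <;> omega
    have h6 : (m * e1 + j1) % (2 * m) = (m * e2 + j2) % (2 * m) := h5
    rw [Nat.mod_eq_of_lt hA1, Nat.mod_eq_of_lt hA2] at h6
    interval_cases e1 <;> interval_cases e2 <;> omega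
  -- difference sets explicitly
  have hdstar : ∀ i j, dstar (I i j) =
      ((Finset.Icc (-(w : ℤ) + 1) ((w : ℤ) - 1)).erase 0).image
        (fun c : ℤ => (c : ZMod p) * (α ^ i * g ^ j)) := by
    intro i j
    have hh0 : (α : ZMod p) ^ i * g ^ j ≠ 0 :=
      mul_ne_zero (pow_ne_zero _ hα0) (pow_ne_zero _ hg0)
    ext x
    simp only [dstar, hI, Finset.mem_image, Finset.mem_filter, Finset.mem_product,
      Finset.mem_erase, Finset.mem_Icc, Finset.mem_range, Prod.exists]
    constructor
    · rintro ⟨a, b, ⟨⟨⟨k1, hk1, rfl⟩, ⟨k2, hk2, rfl⟩⟩, hne⟩, rfl⟩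
      refine ⟨(k1 : ℤ) - (k2 : ℤ), ⟨?_, by omega, by omega⟩, ?_⟩
      · intro h0
        have : k1 = k2 := by omega
        exact hne (by rw [this])
      · push_cast
        ring
    · rintro ⟨c, ⟨hc0, hlb, hub⟩, rfl⟩
      rcases lt_or_gt_of_ne hc0 with hneg | hpos
      · refine ⟨0, ((-c).toNat : ZMod p) * (α ^ i * g ^ j), ⟨⟨⟨0, by omega, by push_cast; ring⟩,
          ⟨(-c).toNat, by omega, rfl⟩⟩, ?_⟩, ?_⟩
        · intro h0
          have hk : 1 ≤ (-c).toNat := by omega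
          have hk' : (-c).toNat ≤ w - 1 := by omega
          exact mul_ne_zero (hkne _ hk hk') hh0 h0.symm
        · have hcast : (((-c).toNat : ℕ) : ZMod p) = ((-c : ℤ) : ZMod p) := by
            have h1 : (((-c).toNat : ℕ) : ℤ) = -c := Int.toNat_of_nonneg (by omega)
            exact_mod_cast congrArg (Int.cast : ℤ → ZMod p) h1
          rw [hcast]
          push_cast
          ring
      · refine ⟨(c.toNat : ZMod p) * (α ^ i * g ^ j), 0, ⟨⟨⟨c.toNat, by omega, rfl⟩,
          ⟨0, by omega, by push_cast; ring⟩⟩, ?_⟩, ?_⟩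
        · intro h0
          have hk : 1 ≤ c.toNat := by omega
          have hk' : c.toNat ≤ w - 1 := by omega
          exact mul_ne_zero (hkne _ hk hk') hh0 h0
        · have hcast : ((c.toNat : ℕ) : ZMod p) = ((c : ℤ) : ZMod p) := by
            have h1 : ((c.toNat : ℕ) : ℤ) = c := Int.toNat_of_nonneg (by omega)
            exact_mod_cast congrArg (Int.cast : ℤ → ZMod p) h1
          rw [hcast]
          ring
  have hdcard : ∀ i j, (dstar (I i j)).card = 2 * (w - 1) := by
    intro i j
    rw [hdstar]
    rw [Finset.card_image_of_injOn, Finset.card_erase_of_mem]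
    · rw [Int.card_Icc]
      have : ((w : ℤ) - 1 + 1 - (-(w : ℤ) + 1)).toNat = 2 * w - 1 := by omega
      rw [this]
      omega
    · simp only [Finset.mem_Icc]
      omega
    · intro c1 h1 c2 h2 heq
      simp only [Finset.mem_coe, Finset.mem_erase, Finset.mem_Icc] at h1 h2
      have hh0 : (α : ZMod p) ^ i * g ^ j ≠ 0 :=
        mul_ne_zero (pow_ne_zero _ hα0) (pow_ne_zero _ hg0)
      have h3 : ((c1 : ℤ) : ZMod p) = ((c2 : ℤ) : ZMod p) := mul_right_cancel₀ hh0 heq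
      have h4 : ((c1 - c2 : ℤ) : ZMod p) = 0 := by push_cast; rw [h3]; ring
      have h5 : c1 - c2 = 0 := hcast0 _ (by omega) h4
      omega
  -- membership extraction
  have hmem : ∀ i j x, x ∈ dstar (I i j) → ∃ c : ℤ, c ≠ 0 ∧ c.natAbs ≤ w - 1 ∧
      x = (c : ZMod p) * (α ^ i * g ^ j) := by
    intro i j x hx
    rw [hdstar] at hx
    simp only [Finset.mem_image, Finset.mem_erase, Finset.mem_Icc] at hx
    obtain ⟨c, ⟨hc0, hlb, hub⟩, rfl⟩ := hx
    exact ⟨c, hc0, by omega, rfl⟩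
  have hdisj : ∀ i₁ < s, ∀ j₁ < m, ∀ i₂ < s, ∀ j₂ < m, (i₁, j₁) ≠ (i₂, j₂) →
      Disjoint (dstar (I i₁ j₁)) (dstar (I i₂ j₂)) := by
    intro i1 hi1 j1 hj1 i2 hi2 j2 hj2 hne
    rw [Finset.disjoint_left]
    intro x hx1 hx2
    obtain ⟨c1, hc1, hb1, hx1'⟩ := hmem _ _ _ hx1
    obtain ⟨c2, hc2, hb2, hx2'⟩ := hmem _ _ _ hx2
    have heq : (c1 : ZMod p) * (α ^ i1 * g ^ j1) = (c2 : ZMod p) * (α ^ i2 * g ^ j2) := by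
      rw [← hx1', ← hx2']
    obtain ⟨hie, hje⟩ := hkey i1 j1 i2 j2 c1 c2 hi1 hj1 hi2 hj2 hc1 hc2 hb1 hb2 heq
    exact hne (by rw [hie, hje])
  refine ⟨?_, hdisj, ?_⟩
  · intro i hi j hj
    rw [hI, Finset.card_image_of_injOn, Finset.card_range]
    intro k1 h1 k2 h2 heq
    simp only [Finset.mem_coe, Finset.mem_range] at h1 h2
    have hh0 : (α : ZMod p) ^ i * g ^ j ≠ 0 :=
      mul_ne_zero (pow_ne_zero _ hα0) (pow_ne_zero _ hg0)
    have h3 : (k1 : ZMod p) = (k2 : ZMod p) := mul_right_cancel₀ hh0 heq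
    have h4 : ((k1 - k2 : ℤ) : ZMod p) = 0 := by
      push_cast
      rw [h3]; ring
    have h5 : (k1 : ℤ) - (k2 : ℤ) = 0 := hcast0 _ (by omega) h4
    omega
  · apply Finset.eq_of_subset_of_card_le
    · intro x hx
      rw [Finset.mem_biUnion] at hx
      obtain ⟨q, hq, hx⟩ := hx
      obtain ⟨c, hc0, hb, rfl⟩ := hmem _ _ _ hx
      rw [Finset.mem_sdiff, Finset.mem_singleton]
      refine ⟨Finset.mem_univ _, ?_⟩
      exact mul_ne_zero (hcne c hc0 hb)
        (mul_ne_zero (pow_ne_zero _ hα0) (pow_ne_zero _ hg0))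
    · have hdisj' : ∀ q1 ∈ Finset.range s ×ˢ Finset.range m,
          ∀ q2 ∈ Finset.range s ×ˢ Finset.range m, q1 ≠ q2 →
          Disjoint (dstar (I q1.1 q1.2)) (dstar (I q2.1 q2.2)) := by
        intro q1 hq1 q2 hq2 hne
        rw [Finset.mem_product, Finset.mem_range, Finset.mem_range] at hq1 hq2
        exact hdisj q1.1 hq1.1 q1.2 hq1.2 q2.1 hq2.1 q2.2 hq2.2
          (by simpa [Prod.ext_iff] using hne)
      rw [Finset.card_biUnion hdisj']
      have hsum : ∑ q ∈ Finset.range s ×ˢ Finset.range m, (dstar (I q.1 q.2)).card =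
          ∑ _q ∈ Finset.range s ×ˢ Finset.range m, 2 * (w - 1) :=
        Finset.sum_congr rfl fun q _ => hdcard q.1 q.2
      rw [hsum, Finset.sum_const, Finset.card_product, Finset.card_range, Finset.card_range,
        smul_eq_mul]
      have hcardsd : (Finset.univ \ {0} : Finset (ZMod p)).card = p - 1 := by
        rw [Finset.card_sdiff_of_subset (by simp), Finset.card_singleton, Finset.card_univ, ZMod.card]
      rw [hcardsd, hp1]
      have : s * m * (2 * (w - 1)) = 2 * (w - 1) * m * s := by ring
      omega
end

section
/- Let L = pq with p, q distinct primes, w ≤ p ≤ 2(w-1), and let K = {0, q, 2q, ..., (w-1)q} ⊆ Z_L. Then d*(K) equals the set of all nonzero multiples of q in Z_L, |d*(K)| = p - 1 < 2w - 2, so K is an exceptional codeword, and d(K) = d*(K) ∪ {0} is the subgroup of (Z_L, +) of order p. -/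
private lemma key13 {p q : ℕ} [NeZero (p * q)] (hq : q ≠ 0) (m n : ℕ) :
    (m : ZMod (p * q)) * (q : ZMod (p * q)) = (n : ZMod (p * q)) * (q : ZMod (p * q)) ↔
      m % p = n % p := by
  have h1 : ((m : ZMod (p * q)) * (q : ZMod (p * q)) = (n : ZMod (p * q)) * (q : ZMod (p * q)))
      ↔ ((m * q : ℕ) : ZMod (p * q)) = ((n * q : ℕ) : ZMod (p * q)) := by
    push_cast; tauto
  rw [h1, ZMod.natCast_eq_natCast_iff, Nat.modEq_iff_dvd]
  have h2 : ((n * q : ℕ) : ℤ) - (m * q : ℕ) = ((n : ℤ) - m) * q := by push_cast; ring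
  rw [h2]
  have hq' : (q : ℤ) ≠ 0 := by exact_mod_cast hq
  rw [show ((p * q : ℕ) : ℤ) = (p : ℤ) * q by push_cast; ring,
    mul_dvd_mul_iff_right hq']
  rw [← Int.modEq_iff_dvd]
  show (m : ℤ) % p = (n : ℤ) % p ↔ _
  rw [← Int.natCast_mod, ← Int.natCast_mod, Nat.cast_inj]

/-- Let `L = pq` with `p, q` distinct primes and `w ≤ p ≤ 2(w-1)`, and let
`K = {0, q, 2q, ..., (w-1)q} ⊆ Z_L`. Then `d*(K)` is the set of nonzero multiples of `q`,
`|d*(K)| = p - 1 < 2w - 2` (so `K` is exceptional), and `d(K) = d*(K) ∪ {0}` is the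
subgroup of `(Z_L, +)` generated by `q`, of order `p`. -/
theorem stmt13 (p q w : ℕ) (hp : p.Prime) (hq : q.Prime) (hpq : p ≠ q)
    (hwp : w ≤ p) (hpw : p ≤ 2 * (w - 1)) [NeZero (p * q)]
    (K : Finset (ZMod (p * q)))
    (hK : K = (Finset.range w).image fun k : ℕ => (k : ZMod (p * q)) * (q : ZMod (p * q))) :
    dstar K = (Finset.univ.filter fun a : ZMod (p * q) =>
      a ≠ 0 ∧ ∃ c : ZMod (p * q), a = (q : ZMod (p * q)) * c) ∧
    (dstar K).card = p - 1 ∧ p - 1 < 2 * w - 2 ∧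
    ((dstar K ∪ {0} : Finset (ZMod (p * q))) : Set (ZMod (p * q))) =
      (AddSubgroup.zmultiples ((q : ZMod (p * q))) : Set (ZMod (p * q))) ∧
    (dstar K ∪ {0}).card = p := by
  have hp2 : 2 ≤ p := hp.two_le
  have hw2 : 2 ≤ w := by omega
  have hq0 : q ≠ 0 := hq.ne_zero
  set f : ℕ → ZMod (p * q) := fun k => (k : ZMod (p * q)) * (q : ZMod (p * q)) with hf
  have key : ∀ m n : ℕ, f m = f n ↔ m % p = n % p := fun m n => key13 hq0 m n
  have hf0 : f 0 = 0 := by simp [hf]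
  have hfadd : ∀ m n : ℕ, f (m + n) = f m + f n := by
    intro m n; simp only [hf]; push_cast; ring
  have hfp : f p = 0 := by
    simp only [hf]
    rw [show (p : ZMod (p * q)) * (q : ZMod (p * q)) = ((p * q : ℕ) : ZMod (p * q)) by
      push_cast; ring, ZMod.natCast_self]
  have hfneg : ∀ d : ℕ, d ≤ p → f (p - d) = - f d := by
    intro d hd
    have := hfadd (p - d) d
    rw [Nat.sub_add_cancel hd, hfp] at this
    exact eq_neg_of_add_eq_zero_left this.symm
  -- nonzero criterion
  have hfne : ∀ r : ℕ, 0 < r → r < p → f r ≠ 0 := by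
    intro r h1 h2 h
    rw [← hf0, key, Nat.mod_eq_of_lt h2, Nat.zero_mod] at h
    omega
  -- main characterization as image of Ico
  have hmain : dstar K = (Finset.Ico 1 p).image f := by
    ext x
    simp only [dstar, hK, Finset.mem_image, Finset.mem_filter, Finset.mem_product,
      Finset.mem_range, Finset.mem_Ico, Prod.exists]
    constructor
    · rintro ⟨a, b, ⟨⟨⟨ka, hka, rfl⟩, ⟨kb, hkb, rfl⟩⟩, hne⟩, rfl⟩
      have hne' : ka ≠ kb := by rintro rfl; exact hne rfl
      rcases lt_or_gt_of_ne hne' with h | h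
      · -- ka < kb : use p - (kb - ka)
        refine ⟨p - (kb - ka), ⟨by omega, by omega⟩, ?_⟩
        have := hfadd ka (kb - ka)
        rw [show ka + (kb - ka) = kb by omega] at this
        show f (p - (kb-ka)) = f ka - f kb
        rw [hfneg _ (by omega), this]
        ring
      · refine ⟨ka - kb, ⟨by omega, by omega⟩, ?_⟩
        have := hfadd kb (ka - kb)
        rw [show kb + (ka - kb) = ka by omega] at this
        show f (ka - kb) = f ka - f kb
        rw [this]; ring
    · rintro ⟨r, ⟨hr1, hr2⟩, rfl⟩
      by_cases hrw : r < w
      · refine ⟨f r, f 0, ⟨⟨⟨r, hrw, rfl⟩, ⟨0, by omega, rfl⟩⟩, ?_⟩, by rw [hf0]; ring⟩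
        show f r ≠ f 0
        rw [hf0]; exact hfne r hr1 hr2
      · refine ⟨f 0, f (p - r), ⟨⟨⟨0, by omega, rfl⟩, ⟨p - r, by omega, rfl⟩⟩, ?_⟩, ?_⟩
        · show f 0 ≠ f (p - r)
          rw [hf0]
          exact fun h => hfne (p - r) (by omega) (by omega) h.symm
        · show f 0 - f (p - r) = f r
          rw [hf0, hfneg _ (by omega)]; ring
  -- characterization as filter
  have hT : (Finset.Ico 1 p).image f = (Finset.univ.filter fun a : ZMod (p * q) =>
      a ≠ 0 ∧ ∃ c : ZMod (p * q), a = (q : ZMod (p * q)) * c) := by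
    ext x
    simp only [Finset.mem_image, Finset.mem_Ico, Finset.mem_filter, Finset.mem_univ, true_and]
    constructor
    · rintro ⟨r, ⟨hr1, hr2⟩, rfl⟩
      exact ⟨hfne r hr1 hr2, (r : ZMod (p * q)), by simp [hf]; ring⟩
    · rintro ⟨hx0, c, rfl⟩
      have hc : (c.val : ZMod (p * q)) = c := by simp [ZMod.natCast_val, ZMod.cast_id]
      have hxc : f c.val = (q : ZMod (p * q)) * c := by
        show (c.val : ZMod (p * q)) * (q : ZMod (p * q)) = _
        conv_rhs => rw [← hc]
        ring
      refine ⟨c.val % p, ⟨?_, Nat.mod_lt _ (by omega)⟩, ?_⟩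
      · rcases Nat.eq_zero_or_pos (c.val % p) with h | h
        · exfalso
          have : f (c.val % p) = f c.val := by
            rw [key]; exact Nat.mod_mod_of_dvd _ dvd_rfl
          rw [h, hf0] at this
          exact hx0 (by rw [← hxc, ← this])
        · omega
      · rw [← hxc, key]
        exact Nat.mod_mod_of_dvd _ dvd_rfl
  have hinj : Set.InjOn f (Finset.Ico 1 p) := by
    intro m hm n hn h
    simp only [Finset.coe_Ico, Set.mem_Ico] at hm hn
    rw [key, Nat.mod_eq_of_lt hm.2, Nat.mod_eq_of_lt hn.2] at h
    exact h
  have hcard : (dstar K).card = p - 1 := by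
    rw [hmain, Finset.card_image_of_injOn hinj, Nat.card_Ico]
  have h0 : (0 : ZMod (p * q)) ∉ dstar K := by
    rw [hmain, hT]
    simp
  refine ⟨by rw [hmain, hT], hcard, by omega, ?_, ?_⟩
  · ext x
    simp only [Finset.coe_union, Set.mem_union, Finset.mem_coe, Finset.coe_singleton,
      Set.mem_singleton_iff, SetLike.mem_coe, AddSubgroup.mem_zmultiples_iff]
    rw [hmain, hT]
    simp only [Finset.mem_filter, Finset.mem_univ, true_and]
    constructor
    · rintro (⟨-, c, rfl⟩ | rfl)
      · refine ⟨(c.val : ℤ), ?_⟩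
        have hc : (c.val : ZMod (p * q)) = c := by simp [ZMod.natCast_val, ZMod.cast_id]
        rw [zsmul_eq_mul]
        push_cast
        rw [hc]; ring
      · exact ⟨0, by simp⟩
    · rintro ⟨k, rfl⟩
      rw [zsmul_eq_mul]
      by_cases h : (k : ZMod (p * q)) * (q : ZMod (p * q)) = 0
      · right; exact h
      · left; exact ⟨h, (k : ZMod (p * q)), by ring⟩
  · rw [Finset.card_union_of_disjoint (by simpa using h0), hcard]
    simp; omega
end

section
/- Let L = pq where q = 2(w-1)f + 1 and w ≤ p ≤ 2(w-1) are primes, and suppose there exists a subgroup H ≤ (Z_L)^× with -1 ∈ H, |H| = (p-1)(q-1)/(w-1), such that {1, 2, ..., w-1} is a system of distinct representatives for the cosets of H in (Z_L)^×; and similarly a subgroup N ≤ Z_q* with -1 ∈ N, |N| = (q-1)/(w-1), and {1,...,w-1} an SDR of its cosets. Then there is an equi-difference conflict-avoiding code of length L and weight w of size pf + 1 whose difference sets partition Z_L \ {0}. -/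
/-!
The difference set of the equi-difference codeword generated by `g` is `{±g, ±2g, …, ±(w-1)g}`.
By the Chinese remainder theorem the nonzero residues mod `pq` split into the units, the nonzero
multiples of `p` (a copy of `(Z_q)ˣ`) and the nonzero multiples of `q` (a copy of `Z_p \ {0}`).
Since `-1 ∈ H` and `{1, …, w-1}` is an SDR of the cosets of `H`, the codewords generated by one
element of each pair `{h, -h} ⊆ H` have difference sets partitioning the units; the same holds for
`N` in `Z_q`, transported to the multiples of `p`; and since `p < 2w`, the codeword generated by
`q` covers all nonzero multiples of `q`. This gives `|H|/2 + |N|/2 + 1 = pf + 1` codewords.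
-/

open Finset Function

theorem Finset.exists_card_eq_two_mul_of_involutive {α : Type*} [DecidableEq α] (A : Finset α)
    {g : α → α} (hg : Involutive g) (hA : ∀ x ∈ A, g x ∈ A) (hfix : ∀ x ∈ A, g x ≠ x) :
    ∃ S ⊆ A, (∀ x ∈ A, x ∈ S ↔ g x ∉ S) ∧ #A = 2 * #S := by
  classical
  -- `S` keeps the smaller element of each orbit `{x, g x}` for an arbitrary linear order.
  let _ : LinearOrder α := IsWellOrder.linearOrder WellOrderingRel
  refine ⟨A.filter fun x => x < g x, filter_subset _ _, fun x hx => ?_, ?_⟩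
  · simp only [mem_filter, hx, hA x hx, true_and, hg x, not_lt]
    exact ⟨le_of_lt, fun h => lt_of_le_of_ne h (hfix x hx).symm⟩
  · have hswap : #(A.filter fun x => ¬ x < g x) = #(A.filter fun x => x < g x) := by
      refine card_nbij' g g ?_ ?_ (fun x _ => hg x) (fun x _ => hg x) <;>
        intro x hx <;> simp only [mem_coe, mem_filter, hg x, not_lt] at hx ⊢
      · exact ⟨hA x hx.1, lt_of_le_of_ne hx.2 (hfix x hx.1)⟩
      · exact ⟨hA x hx.1, hx.2.le⟩
    rw [← card_filter_add_card_filter_not (fun x => x < g x), hswap, two_mul]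

theorem Subgroup.exists_card_eq_two_mul_of_neg_one_mem {α : Type*} [Group α] [HasDistribNeg α]
    [Fintype α] [DecidableEq α] (G : Subgroup α) (hG : (-1 : α) ∈ G) (h1 : (-1 : α) ≠ 1) :
    ∃ S : Finset α, (∀ h ∈ S, h ∈ G) ∧ (∀ h ∈ G, h ∈ S ↔ -h ∉ S) ∧ Nat.card G = 2 * #S := by
  classical
  have hneg : ∀ h ∈ G, -h ∈ G := fun h hh => by simpa using G.mul_mem hG hh
  obtain ⟨S, hSA, hS, hcard⟩ := exists_card_eq_two_mul_of_involutive (univ.filter (· ∈ G))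
    neg_involutive (fun h hh => by simpa using hneg h (by simpa using hh))
    (fun h _ hh => h1 (mul_right_cancel (b := h) (by simpa using hh)))
  refine ⟨S, fun h hh => by simpa using hSA hh, fun h hh => hS h (by simpa using hh), ?_⟩
  rw [← hcard, Nat.card_eq_fintype_card, Fintype.card_subtype]

namespace ConflictAvoiding

variable {L w : ℕ}

def codeword (w : ℕ) (g : ZMod L) : Finset (ZMod L) :=
  (range w).image fun k : ℕ => (k : ZMod L) * g

theorem card_codeword {g : ZMod L} (hg : ∀ k : ℕ, 0 < k → k < w → (k : ZMod L) * g ≠ 0) :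
    #(codeword w g) = w := by
  have hinj : ∀ i j : ℕ, i < j → j < w → (i : ZMod L) * g ≠ j * g := fun i j hij hj h =>
    hg (j - i) (by omega) (by omega) (by push_cast [Nat.cast_sub hij.le]; linear_combination -h)
  rw [codeword, card_image_of_injOn, card_range]
  intro i hi j hj h
  simp only [coe_range, Set.mem_Iio] at hi hj
  rcases lt_trichotomy i j with hij | hij | hij
  exacts [absurd h (hinj i j hij hj), hij, absurd h.symm (hinj j i hij hi)]

theorem mem_dstar_codeword {g x : ZMod L}
    (hg : ∀ k : ℕ, 0 < k → k < w → (k : ZMod L) * g ≠ 0) :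
    x ∈ dstar (codeword w g) ↔ ∃ k : ℕ, 0 < k ∧ k < w ∧ (x = k * g ∨ x = k * -g) := by
  simp only [dstar, codeword, mem_image, mem_filter, mem_product, mem_range, Prod.exists]
  constructor
  · rintro ⟨_, _, ⟨⟨⟨i, hi, rfl⟩, ⟨j, hj, rfl⟩⟩, hij⟩, rfl⟩
    rcases lt_or_gt_of_ne (ne_of_apply_ne (fun k : ℕ => (k : ZMod L) * g) hij) with h | h
    · exact ⟨j - i, by omega, by omega, Or.inr (by push_cast [Nat.cast_sub h.le]; ring)⟩
    · exact ⟨i - j, by omega, by omega, Or.inl (by push_cast [Nat.cast_sub h.le]; ring)⟩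
  · rintro ⟨k, hk, hkw, rfl | rfl⟩
    · exact ⟨k * g, 0, ⟨⟨⟨k, hkw, rfl⟩, ⟨0, by omega, by simp⟩⟩, by simpa using hg k hk hkw⟩,
        by simp⟩
    · exact ⟨0, k * g, ⟨⟨⟨0, by omega, by simp⟩, ⟨k, hkw, rfl⟩⟩,
        by simpa [eq_comm] using hg k hk hkw⟩, by ring⟩

theorem codeword_map {M : ℕ} (φ : ZMod L →+ ZMod M) (g : ZMod L) :
    codeword w (φ g) = (codeword w g).image φ := by
  simp only [codeword, image_image, comp_def, ← nsmul_eq_mul, map_nsmul]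

theorem dstar_image {M : ℕ} {φ : ZMod L →+ ZMod M} (hφ : Injective φ) (I : Finset (ZMod L)) :
    dstar (I.image φ) = (dstar I).image φ := by
  ext x
  simp only [dstar, mem_image, mem_filter, mem_product, Prod.exists]
  constructor
  · rintro ⟨_, _, ⟨⟨⟨a, ha, rfl⟩, ⟨b, hb, rfl⟩⟩, hab⟩, rfl⟩
    exact ⟨_, ⟨a, b, ⟨⟨ha, hb⟩, fun h => hab (h ▸ rfl)⟩, rfl⟩, map_sub φ a b⟩
  · rintro ⟨_, ⟨a, b, ⟨⟨ha, hb⟩, hab⟩, rfl⟩, rfl⟩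
    exact ⟨φ a, φ b, ⟨⟨⟨a, ha, rfl⟩, ⟨b, hb, rfl⟩⟩, hφ.ne hab⟩, (map_sub φ a b).symm⟩

structure IsEquiDiffPartition {ι : Type*} (w : ℕ) (T : Finset ι) (g : ι → ZMod L)
    (U : Finset (ZMod L)) : Prop where
  /-- each codeword `{0, g i, …, (w-1) g i}` has `w` distinct elements -/
  natCast_mul_ne_zero : ∀ i ∈ T, ∀ k : ℕ, 0 < k → k < w → (k : ZMod L) * g i ≠ 0
  pairwiseDisjoint : (T : Set ι).PairwiseDisjoint fun i => dstar (codeword w (g i))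
  biUnion_eq : T.biUnion (fun i => dstar (codeword w (g i))) = U

namespace IsEquiDiffPartition

variable {ι κ : Type*} {T : Finset ι} {g : ι → ZMod L} {U : Finset (ZMod L)}

theorem dstar_subset (hT : IsEquiDiffPartition w T g U) {i : ι} (hi : i ∈ T) :
    dstar (codeword w (g i)) ⊆ U :=
  hT.biUnion_eq ▸ subset_biUnion_of_mem (fun i => dstar (codeword w (g i))) hi

theorem disjSum {S : Finset κ} {h : κ → ZMod L} {V : Finset (ZMod L)}
    (hT : IsEquiDiffPartition w T g U) (hS : IsEquiDiffPartition w S h V) (hUV : Disjoint U V) :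
    IsEquiDiffPartition w (T.disjSum S) (Sum.elim g h) (U ∪ V) where
  natCast_mul_ne_zero := by
    rintro (i | i) hi
    exacts [hT.natCast_mul_ne_zero i (by simpa using hi),
      hS.natCast_mul_ne_zero i (by simpa using hi)]
  pairwiseDisjoint := by
    rintro (i | i) hi (j | j) hj hij <;> simp only [mem_coe, inl_mem_disjSum, inr_mem_disjSum]
      at hi hj
    · exact hT.pairwiseDisjoint hi hj (fun h => hij (congrArg _ h))
    · exact hUV.mono (hT.dstar_subset hi) (hS.dstar_subset hj)
    · exact (hUV.mono (hT.dstar_subset hj) (hS.dstar_subset hi)).symm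
    · exact hS.pairwiseDisjoint hi hj (fun h => hij (congrArg _ h))
  biUnion_eq := by
    rw [← hT.biUnion_eq, ← hS.biUnion_eq]
    ext x
    simp [mem_disjSum]

theorem map {M : ℕ} (hT : IsEquiDiffPartition w T g U) {φ : ZMod L →+ ZMod M}
    (hφ : Injective φ) : IsEquiDiffPartition w T (φ ∘ g) (U.image φ) := by
  have hd : ∀ i, dstar (codeword w ((φ ∘ g) i)) = (dstar (codeword w (g i))).image φ := fun i => by
    rw [comp_apply, codeword_map, dstar_image hφ]
  refine ⟨fun i hi k hk hkw => ?_, fun i hi j hj hij => ?_, ?_⟩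
  · rw [comp_apply, ← nsmul_eq_mul, ← map_nsmul, map_ne_zero_iff φ hφ, nsmul_eq_mul]
    exact hT.natCast_mul_ne_zero i hi k hk hkw
  · simp only [onFun, hd, disjoint_image hφ]
    exact hT.pairwiseDisjoint hi hj hij
  · simp only [hd, ← biUnion_image, hT.biUnion_eq]

theorem exists_code (hT : IsEquiDiffPartition w T g U) (hw : 2 ≤ w) :
    ∃ C : Finset (Finset (ZMod L)), #C = #T ∧
      (∀ I ∈ C, #I = w ∧ ∃ g : ZMod L, I = (range w).image fun k : ℕ => (k : ZMod L) * g) ∧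
      (∀ I ∈ C, ∀ J ∈ C, I ≠ J → Disjoint (dstar I) (dstar J)) ∧ C.biUnion dstar = U := by
  have hself : ∀ i ∈ T, g i ∈ dstar (codeword w (g i)) := fun i hi =>
    (mem_dstar_codeword (hT.natCast_mul_ne_zero i hi)).2 ⟨1, one_pos, hw, Or.inl (by simp)⟩
  have hinj : Set.InjOn (fun i => codeword w (g i)) T := fun i hi j hj hij => by
    by_contra hne
    exact disjoint_left.1 (hT.pairwiseDisjoint hi hj hne) (hself i hi)
      (by simpa only [← hij] using hself i hi)
  refine ⟨T.image fun i => codeword w (g i), card_image_of_injOn hinj, ?_, ?_, ?_⟩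
  · simp only [mem_image, forall_exists_index, and_imp]
    rintro _ i hi rfl
    exact ⟨card_codeword (hT.natCast_mul_ne_zero i hi), g i, rfl⟩
  · simp only [mem_image, forall_exists_index, and_imp]
    rintro _ i hi rfl _ j hj rfl hij
    exact hT.pairwiseDisjoint hi hj fun h => hij (h ▸ rfl)
  · rw [image_biUnion, hT.biUnion_eq]

end IsEquiDiffPartition

section Units

variable {M : ℕ}

theorem eq_of_natCast_mul_eq_of_sdr (G : Subgroup (ZMod M)ˣ)
    (hSDR : ∀ u : (ZMod M)ˣ, ∃! j : ℕ, 1 ≤ j ∧ j ≤ w - 1 ∧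
      ∃ h ∈ G, (u : ZMod M) = (j : ZMod M) * ((h : (ZMod M)ˣ) : ZMod M))
    {k k' : ℕ} (hk : 0 < k ∧ k < w) (hk' : 0 < k' ∧ k' < w) (hku : IsUnit (k : ZMod M))
    {h h' : (ZMod M)ˣ} (hh : h ∈ G) (hh' : h' ∈ G) (heq : (k : ZMod M) * h = k' * h') :
    h = h' := by
  obtain ⟨j, -, hj⟩ := hSDR (hku.unit * h)
  have hkk' : k = k' :=
    (hj k ⟨by omega, by omega, h, hh, rfl⟩).trans (hj k' ⟨by omega, by omega, h', hh', heq⟩).symm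
  subst hkk'
  exact Units.ext (hku.mul_left_cancel heq)

theorem isEquiDiffPartition_units [NeZero M] [Nontrivial (ZMod M)] (G : Subgroup (ZMod M)ˣ)
    (hG : (-1 : (ZMod M)ˣ) ∈ G)
    (hSDR : ∀ u : (ZMod M)ˣ, ∃! j : ℕ, 1 ≤ j ∧ j ≤ w - 1 ∧
      ∃ h ∈ G, (u : ZMod M) = (j : ZMod M) * ((h : (ZMod M)ˣ) : ZMod M))
    (hw : ∀ k : ℕ, 0 < k → k < w → IsUnit (k : ZMod M))
    {S : Finset (ZMod M)ˣ} (hSG : ∀ h ∈ S, h ∈ G) (hS : ∀ h ∈ G, h ∈ S ↔ -h ∉ S) :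
    IsEquiDiffPartition w S (fun h => (h : ZMod M)) (univ.filter IsUnit) := by
  have hne : ∀ h : (ZMod M)ˣ, ∀ k : ℕ, 0 < k → k < w → (k : ZMod M) * h ≠ 0 :=
    fun h k hk hkw => ((hw k hk hkw).mul h.isUnit).ne_zero
  have hmem : ∀ (h : (ZMod M)ˣ) x, x ∈ dstar (codeword w (h : ZMod M)) ↔
      ∃ k : ℕ, 0 < k ∧ k < w ∧ (x = k * h ∨ x = k * ↑(-h)) := fun h x => by
    rw [mem_dstar_codeword (hne h), Units.val_neg]
  refine ⟨fun h _ => hne h, fun h hh h' hh' hhh' => disjoint_left.2 fun x hx hx' => ?_, ?_⟩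
  · obtain ⟨k, hk, hkw, hx⟩ := (hmem h x).1 hx
    obtain ⟨k', hk', hkw', hx'⟩ := (hmem h' x).1 hx'
    have key : ∀ a b : (ZMod M)ˣ, a ∈ G → b ∈ G → (k : ZMod M) * a = k' * b → a = b :=
      fun a b ha hb => eq_of_natCast_mul_eq_of_sdr G hSDR ⟨hk, hkw⟩ ⟨hk', hkw'⟩ (hw k hk hkw) ha hb
    have hneg : ∀ a ∈ S, -a ∈ G := fun a ha => by simpa using G.mul_mem hG (hSG a ha)
    rcases hx with rfl | rfl <;> rcases hx' with hx' | hx'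
    · exact hhh' (key _ _ (hSG h hh) (hSG h' hh') hx')
    · exact (hS h' (hSG h' hh')).1 hh' (key _ _ (hSG h hh) (hneg h' hh') hx' ▸ hh)
    · exact (hS h (hSG h hh)).1 hh (key _ _ (hneg h hh) (hSG h' hh') hx' ▸ hh')
    · exact hhh' (neg_injective (key _ _ (hneg h hh) (hneg h' hh') hx'))
  · ext x
    simp only [mem_biUnion, mem_filter, mem_univ, true_and]
    constructor
    · rintro ⟨h, -, hx⟩
      obtain ⟨k, hk, hkw, rfl | rfl⟩ := (hmem h x).1 hx
      exacts [(hw k hk hkw).mul h.isUnit, (hw k hk hkw).mul (-h).isUnit]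
    · intro hx
      obtain ⟨j, ⟨hj1, hj2, h, hh, hxj⟩, -⟩ := hSDR hx.unit
      rw [IsUnit.unit_spec] at hxj
      by_cases hhS : h ∈ S
      · exact ⟨h, hhS, (hmem h x).2 ⟨j, by omega, by omega, Or.inl hxj⟩⟩
      · exact ⟨-h, not_not.1 ((hS h hh).not.1 hhS),
          (hmem (-h) x).2 ⟨j, by omega, by omega, Or.inr (by rw [neg_neg]; exact hxj)⟩⟩

end Units

theorem isEquiDiffPartition_one {p : ℕ} [NeZero p] (hwp : w ≤ p) (hpw : p < 2 * w) :
    IsEquiDiffPartition w ({()} : Finset Unit) (fun _ => (1 : ZMod p)) (univ \ {0}) := by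
  have hne : ∀ k : ℕ, 0 < k → k < w → (k : ZMod p) * 1 ≠ 0 := fun k hk hkw => by
    rw [mul_one, Ne, ZMod.natCast_eq_zero_iff]
    exact fun hdvd => absurd (Nat.le_of_dvd hk hdvd) (by omega)
  refine ⟨fun _ _ => hne, by simp, ?_⟩
  ext x
  rw [singleton_biUnion, mem_dstar_codeword hne, mem_sdiff, mem_singleton]
  constructor
  · rintro ⟨k, hk, hkw, rfl | rfl⟩
    exacts [⟨mem_univ _, hne k hk hkw⟩, ⟨mem_univ _, by simpa using hne k hk hkw⟩]
  · rintro ⟨-, hx⟩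
    have hc : 0 < x.val := (ZMod.val_pos).2 hx
    have hcp : x.val < p := ZMod.val_lt x
    by_cases hcw : x.val < w
    · exact ⟨x.val, hc, hcw, Or.inl (by rw [mul_one, ZMod.natCast_zmod_val])⟩
    · refine ⟨p - x.val, by omega, by omega, Or.inr ?_⟩
      rw [Nat.cast_sub hcp.le, ZMod.natCast_self, ZMod.natCast_zmod_val]
      ring

section CRT

variable {p q : ℕ} (hpq : p.Coprime q)

def crtInl : ZMod p →+ ZMod (p * q) :=
  (ZMod.chineseRemainder hpq).symm.toAddMonoidHom.comp (AddMonoidHom.inl _ _)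

def crtInr : ZMod q →+ ZMod (p * q) :=
  (ZMod.chineseRemainder hpq).symm.toAddMonoidHom.comp (AddMonoidHom.inr _ _)

theorem crtInl_injective : Injective (crtInl hpq) :=
  (ZMod.chineseRemainder hpq).symm.injective.comp fun _ _ h => (Prod.ext_iff.1 h).1

theorem crtInr_injective : Injective (crtInr hpq) :=
  (ZMod.chineseRemainder hpq).symm.injective.comp fun _ _ h => (Prod.ext_iff.1 h).2

theorem mem_image_crtInl {s : Finset (ZMod p)} {x : ZMod (p * q)} :
    x ∈ s.image (crtInl hpq) ↔
      (ZMod.chineseRemainder hpq x).1 ∈ s ∧ (ZMod.chineseRemainder hpq x).2 = 0 := by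
  rw [mem_image]
  constructor
  · rintro ⟨a, ha, rfl⟩
    simpa [crtInl] using ha
  · rintro ⟨ha, hb⟩
    refine ⟨_, ha, (ZMod.chineseRemainder hpq).injective ?_⟩
    simp [crtInl, Prod.ext_iff, hb]

theorem mem_image_crtInr {s : Finset (ZMod q)} {x : ZMod (p * q)} :
    x ∈ s.image (crtInr hpq) ↔
      (ZMod.chineseRemainder hpq x).1 = 0 ∧ (ZMod.chineseRemainder hpq x).2 ∈ s := by
  rw [mem_image]
  constructor
  · rintro ⟨a, ha, rfl⟩
    simpa [crtInr] using ha
  · rintro ⟨ha, hb⟩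
    refine ⟨_, hb, (ZMod.chineseRemainder hpq).injective ?_⟩
    simp [crtInr, Prod.ext_iff, ha]

theorem IsEquiDiffPartition.crt [Fact p.Prime] [Fact q.Prime] {ι κ ν : Type*}
    {T : Finset ι} {g : ι → ZMod (p * q)} {S : Finset κ} {h : κ → ZMod q}
    {R : Finset ν} {k : ν → ZMod p}
    (hT : IsEquiDiffPartition w T g (univ.filter IsUnit))
    (hS : IsEquiDiffPartition w S h (univ.filter IsUnit))
    (hR : IsEquiDiffPartition w R k (univ \ {0})) :
    IsEquiDiffPartition w (T.disjSum (S.disjSum R))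
      (Sum.elim g (Sum.elim (crtInr hpq ∘ h) (crtInl hpq ∘ k))) (univ \ {0}) := by
  set e := ZMod.chineseRemainder hpq
  have hunit : ∀ x, IsUnit x ↔ (e x).1 ≠ 0 ∧ (e x).2 ≠ 0 := fun x => by
    rw [← isUnit_map_iff e, Prod.isUnit_iff, isUnit_iff_ne_zero, isUnit_iff_ne_zero]
  have hzero : ∀ x, x = 0 ↔ (e x).1 = 0 ∧ (e x).2 = 0 := fun x => by
    rw [← map_eq_zero_iff e e.injective, Prod.ext_iff, Prod.fst_zero, Prod.snd_zero]
  have hUV := (hS.map (crtInr_injective hpq)).disjSum (hR.map (crtInl_injective hpq)) ?_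
  · convert hT.disjSum hUV ?_ using 1
    · ext x
      simp only [mem_union, mem_filter, mem_sdiff, mem_univ, mem_singleton, true_and,
        mem_image_crtInl, mem_image_crtInr, hunit, isUnit_iff_ne_zero, hzero]
      tauto
    · simp only [disjoint_left, mem_union, mem_filter, mem_sdiff, mem_univ, mem_singleton,
        true_and, mem_image_crtInl, mem_image_crtInr, hunit, isUnit_iff_ne_zero]
      tauto
  · simp only [disjoint_left, mem_filter, mem_sdiff, mem_univ, mem_singleton, true_and,
      mem_image_crtInl, mem_image_crtInr, isUnit_iff_ne_zero]
    tauto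

end CRT

theorem units_neg_one_ne_one {n : ℕ} (hn : 2 < n) : (-1 : (ZMod n)ˣ) ≠ 1 := fun h =>
  haveI : Fact (2 < n) := ⟨hn⟩
  ZMod.neg_one_ne_one (by simpa using congrArg Units.val h)

end ConflictAvoiding

open ConflictAvoiding

/-- Let `L = pq` with `q = 2(w-1)f + 1` and `w ≤ p ≤ 2(w-1)` primes. Suppose there is a
subgroup `H` of `(Z_L)ˣ` with `-1 ∈ H`, `|H| = (p-1)(q-1)/(w-1)`, for which `{1,...,w-1}`
is an SDR of the cosets of `H`, and a subgroup `N` of `(Z_q)ˣ` with `-1 ∈ N`,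
`|N| = (q-1)/(w-1)`, for which `{1,...,w-1}` is an SDR of the cosets of `N`. Then there
exists an equi-difference conflict-avoiding code of length `L = pq` and weight `w` with
`pf + 1` codewords whose difference sets partition `Z_L \ {0}`. -/
theorem stmt14 (p q w f : ℕ) (hp : p.Prime) (hq : q.Prime) (hpq : p ≠ q)
    (hw : 2 ≤ w) (hwp : w ≤ p) (hpw : p ≤ 2 * (w - 1)) (hqf : q = 2 * (w - 1) * f + 1)
    [NeZero (p * q)] [Fact q.Prime]
    (H : Subgroup (ZMod (p * q))ˣ) (hH1 : (-1 : (ZMod (p * q))ˣ) ∈ H)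
    (hHcard : Nat.card H = (p - 1) * (q - 1) / (w - 1))
    (hHSDR : ∀ u : (ZMod (p * q))ˣ, ∃! j : ℕ, 1 ≤ j ∧ j ≤ w - 1 ∧
      ∃ h ∈ H, (u : ZMod (p * q)) = (j : ZMod (p * q)) * ((h : (ZMod (p * q))ˣ) : ZMod (p * q)))
    (N : Subgroup (ZMod q)ˣ) (hN1 : (-1 : (ZMod q)ˣ) ∈ N)
    (hNcard : Nat.card N = (q - 1) / (w - 1))
    (hNSDR : ∀ u : (ZMod q)ˣ, ∃! j : ℕ, 1 ≤ j ∧ j ≤ w - 1 ∧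
      ∃ n ∈ N, (u : ZMod q) = (j : ZMod q) * ((n : (ZMod q)ˣ) : ZMod q)) :
    ∃ C : Finset (Finset (ZMod (p * q))),
      C.card = p * f + 1 ∧
      (∀ I ∈ C, I.card = w ∧ ∃ g : ZMod (p * q),
        I = (Finset.range w).image fun k : ℕ => (k : ZMod (p * q)) * g) ∧
      (∀ I ∈ C, ∀ J ∈ C, I ≠ J → Disjoint (dstar I) (dstar J)) ∧
      C.biUnion dstar = Finset.univ \ {0} := by
  classical
  have : Fact p.Prime := ⟨hp⟩
  have hf : 0 < f := Nat.pos_of_ne_zero fun hf => hq.one_lt.ne' (by simp [hqf, hf])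
  have hpltq : p < q := by nlinarith
  have : Fact (1 < p * q) := ⟨by nlinarith [hp.two_le]⟩
  have hsmall : ∀ k, 0 < k → k < w → k.Coprime p ∧ k.Coprime q := fun k hk hkw =>
    ⟨(Nat.coprime_of_lt_prime hk.ne' (by omega) hp).symm,
      (Nat.coprime_of_lt_prime hk.ne' (by omega) hq).symm⟩
  obtain ⟨SH, hSHG, hSH, hSHcard⟩ :=
    H.exists_card_eq_two_mul_of_neg_one_mem hH1 (units_neg_one_ne_one (by nlinarith))
  obtain ⟨SN, hSNG, hSN, hSNcard⟩ :=
    N.exists_card_eq_two_mul_of_neg_one_mem hN1 (units_neg_one_ne_one (by nlinarith))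
  obtain ⟨C, hCcard, hC⟩ := (IsEquiDiffPartition.crt ((Nat.coprime_primes hp hq).2 hpq)
    (isEquiDiffPartition_units H hH1 hHSDR (fun k hk hkw => (ZMod.isUnit_iff_coprime k _).2
      ((hsmall k hk hkw).1.mul_right (hsmall k hk hkw).2)) hSHG hSH)
    (isEquiDiffPartition_units N hN1 hNSDR (fun k hk hkw => (ZMod.isUnit_iff_coprime k q).2
      (hsmall k hk hkw).2) hSNG hSN)
    (isEquiDiffPartition_one hwp (by omega))).exists_code hw
  refine ⟨C, ?_, hC⟩
  have hq1 : q - 1 = (w - 1) * (2 * f) := by rw [hqf]; ring_nf; omega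
  have hSHf : #SH = (p - 1) * f := by
    rw [hHcard, hq1, mul_left_comm, Nat.mul_div_cancel_left _ (by omega)] at hSHcard
    linarith
  have hSNf : #SN = f := by
    rw [hNcard, hq1, Nat.mul_div_cancel_left _ (by omega)] at hSNcard
    linarith
  rw [hCcard, card_disjSum, card_disjSum, card_singleton, hSHf, hSNf]
  calc (p - 1) * f + (f + 1) = (p - 1 + 1) * f + 1 := by ring
    _ = p * f + 1 := by rw [Nat.sub_add_cancel hp.one_le]
end

section
/- Let C be an equi-difference conflict-avoiding code of length L and weight w ≥ 2 in which every exceptional codeword I satisfies: d(I) is a subgroup of Z_L whose order p_I is a prime divisor of L with w ≤ p_I < 2w - 1, and distinct exceptional codewords give distinct primes p_I. Then |C| ≤ (L - 1 + Σ_{p} (2w - 1 - p))/(2w - 2), where the sum ranges over all prime divisors p of L with w ≤ p < 2w - 1. -/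
/-- New upper bound: let `C` be an equi-difference CAC of length `L`, weight `w ≥ 2`, in
which every exceptional codeword `I` (i.e. `|d*(I)| < 2w - 2`) has `d(I)` a subgroup of
`Z_L` whose order `P I` is a prime divisor of `L` with `w ≤ P I < 2w - 1`, and distinct
exceptional codewords give distinct primes. Then
`|C| ≤ (L - 1 + Σ_p (2w - 1 - p))/(2w - 2)`, the sum over prime divisors `p` of `L` with
`w ≤ p < 2w - 1`. -/
theorem stmt18 (L w : ℕ) [NeZero L] (hw : 2 ≤ w)
    (C : Finset (Finset (ZMod L)))
    (hmem : ∀ I ∈ C, I.card = w ∧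
      ∃ g : ZMod L, I = (Finset.range w).image fun k : ℕ => (k : ZMod L) * g)
    (hdisj : ∀ I ∈ C, ∀ J ∈ C, I ≠ J → Disjoint (dstar I) (dstar J))
    (P : Finset (ZMod L) → ℕ)
    (hexc : ∀ I ∈ C, (dstar I).card < 2 * w - 2 →
      (∃ H : AddSubgroup (ZMod L),
        ((dstar I ∪ {0} : Finset (ZMod L)) : Set (ZMod L)) = (H : Set (ZMod L))) ∧
      (dstar I ∪ {0}).card = P I ∧ (P I).Prime ∧ P I ∣ L ∧ w ≤ P I ∧ P I < 2 * w - 1)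
    (hPinj : ∀ I ∈ C, ∀ J ∈ C, (dstar I).card < 2 * w - 2 → (dstar J).card < 2 * w - 2 →
      I ≠ J → P I ≠ P J) :
    (C.card : ℝ) ≤
      ((L : ℝ) - 1 + ∑ p ∈ L.primeFactors.filter (fun p => w ≤ p ∧ p < 2 * w - 1),
        ((2 * w : ℝ) - 1 - (p : ℝ))) / ((2 * w : ℝ) - 2) := by
  classical
  have hL : 0 < L := Nat.pos_of_ne_zero (NeZero.ne L)
  set S := L.primeFactors.filter (fun p => w ≤ p ∧ p < 2 * w - 1) with hS
  -- 0 is never a difference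
  have h0 : ∀ I : Finset (ZMod L), (0 : ZMod L) ∉ dstar I := by
    intro I h
    simp only [dstar, Finset.mem_image, Finset.mem_filter, Finset.mem_product] at h
    obtain ⟨⟨x, y⟩, ⟨⟨_, _⟩, hne⟩, heq⟩ := h
    exact hne (sub_eq_zero.mp heq)
  -- sum of difference-set sizes is at most L - 1
  have hsum : ∑ I ∈ C, (dstar I).card ≤ L - 1 := by
    rw [← Finset.card_biUnion hdisj]
    have hsub : C.biUnion dstar ⊆ (Finset.univ : Finset (ZMod L)).erase 0 := by
      intro x hx
      rw [Finset.mem_biUnion] at hx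
      obtain ⟨I, _, hxI⟩ := hx
      exact Finset.mem_erase.2 ⟨fun h => h0 I (h ▸ hxI), Finset.mem_univ x⟩
    calc (C.biUnion dstar).card ≤ _ := Finset.card_le_card hsub
      _ = L - 1 := by
        rw [Finset.card_erase_of_mem (Finset.mem_univ 0), Finset.card_univ, ZMod.card]
  set E := C.filter (fun I => (dstar I).card < 2 * w - 2) with hE
  -- exceptional codewords: |d*(I)| = P I - 1 (as reals)
  have hcardE : ∀ I ∈ E, ((dstar I).card : ℝ) = (P I : ℝ) - 1 := by
    intro I hI
    rw [hE, Finset.mem_filter] at hI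
    obtain ⟨_, hPc, _⟩ := hexc I hI.1 hI.2
    have : (dstar I ∪ {0}).card = (dstar I).card + 1 := by
      rw [Finset.card_union_of_disjoint (Finset.disjoint_singleton_right.2 (h0 I)),
        Finset.card_singleton]
    have h1 : (dstar I).card + 1 = P I := by omega
    push_cast [← h1]
    ring
  -- the key inequality over ℝ
  have key : ((2 * w : ℝ) - 2) * C.card ≤
      ((L : ℝ) - 1) + ∑ p ∈ S, ((2 * w : ℝ) - 1 - (p : ℝ)) := by
    have step1 : ((2 * w : ℝ) - 2) * C.card ≤
        (∑ I ∈ C, ((dstar I).card : ℝ)) +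
          ∑ I ∈ E, ((2 * w : ℝ) - 1 - (P I : ℝ)) := by
      have : ((2 * w : ℝ) - 2) * C.card = ∑ I ∈ C, ((2 * w : ℝ) - 2) := by
        rw [Finset.sum_const, nsmul_eq_mul, mul_comm]
      rw [this, hE, Finset.sum_filter, ← Finset.sum_add_distrib]
      apply Finset.sum_le_sum
      intro I hI
      by_cases hx : (dstar I).card < 2 * w - 2
      · have hc := hcardE I (by rw [hE, Finset.mem_filter]; exact ⟨hI, hx⟩)
        rw [if_pos hx, hc]
        linarith
      · rw [if_neg hx, add_zero]
        have : 2 * w - 2 ≤ (dstar I).card := Nat.le_of_not_lt hx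
        have h2 : ((2 * w - 2 : ℕ) : ℝ) ≤ ((dstar I).card : ℝ) := by exact_mod_cast this
        have : ((2 * w - 2 : ℕ) : ℝ) = (2 * w : ℝ) - 2 := by
          push_cast [Nat.cast_sub (by omega : 2 ≤ 2 * w)]
          ring
        linarith
    have step2 : (∑ I ∈ C, ((dstar I).card : ℝ)) ≤ (L : ℝ) - 1 := by
      have : ((∑ I ∈ C, (dstar I).card : ℕ) : ℝ) ≤ ((L - 1 : ℕ) : ℝ) := by
        exact_mod_cast hsum
      rw [Nat.cast_sum] at this
      calc (∑ I ∈ C, ((dstar I).card : ℝ)) ≤ ((L - 1 : ℕ) : ℝ) := this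
        _ = (L : ℝ) - 1 := by push_cast [Nat.cast_sub hL]; ring
    have step3 : ∑ I ∈ E, ((2 * w : ℝ) - 1 - (P I : ℝ)) ≤
        ∑ p ∈ S, ((2 * w : ℝ) - 1 - (p : ℝ)) := by
      have hinj : ∀ x ∈ E, ∀ y ∈ E, P x = P y → x = y := by
        intro x hx y hy hxy
        rw [hE, Finset.mem_filter] at hx hy
        by_contra hne
        exact hPinj x hx.1 y hy.1 hx.2 hy.2 hne hxy
      have heq : ∑ p ∈ E.image P, ((2 * w : ℝ) - 1 - (p : ℝ)) =
          ∑ I ∈ E, ((2 * w : ℝ) - 1 - (P I : ℝ)) := Finset.sum_image hinj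
      rw [← heq]
      apply Finset.sum_le_sum_of_subset_of_nonneg
      · intro p hp
        rw [Finset.mem_image] at hp
        obtain ⟨I, hI, rfl⟩ := hp
        rw [hE, Finset.mem_filter] at hI
        obtain ⟨_, _, hprime, hdvd, hge, hlt⟩ := hexc I hI.1 hI.2
        rw [hS, Finset.mem_filter, Nat.mem_primeFactors]
        exact ⟨⟨hprime, hdvd, NeZero.ne L⟩, hge, hlt⟩
      · intro p hp _
        rw [hS, Finset.mem_filter] at hp
        have : p < 2 * w - 1 := hp.2.2
        have : (p : ℝ) ≤ ((2 * w - 2 : ℕ) : ℝ) := by exact_mod_cast (by omega : p ≤ 2 * w - 2)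
        have h2 : ((2 * w - 2 : ℕ) : ℝ) = (2 * w : ℝ) - 2 := by
          push_cast [Nat.cast_sub (by omega : 2 ≤ 2 * w)]
          ring
        linarith
    linarith
  have hden : (0 : ℝ) < (2 * w : ℝ) - 2 := by
    have : (2 : ℝ) ≤ (w : ℝ) := by exact_mod_cast hw
    linarith
  rw [le_div_iff₀ hden]
  linarith [key]
end

section
/- For w = 3 and any L ≥ 2, if C is an equi-difference conflict-avoiding code of length L and weight 3 in which each exceptional codeword I has d(I) a subgroup of prime order p with 3 ≤ p < 5 and p | L, and distinct exceptional codewords have coprime subgroup orders, then |C| ≤ ⌊(L + 2)/4⌋. -/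
lemma zero_notMem_dstar {L : ℕ} (I : Finset (ZMod L)) : (0 : ZMod L) ∉ dstar I := by
  simp only [dstar, Finset.mem_image, Finset.mem_filter, Finset.mem_product]
  rintro ⟨⟨a, b⟩, ⟨⟨-, -⟩, hne⟩, h⟩
  exact hne (sub_eq_zero.mp h)

/-- For weight `w = 3` and any `L ≥ 2`: if `C` is an equi-difference CAC of length `L` and
weight `3` in which each exceptional codeword `I` (i.e. `|d*(I)| < 4`) has `d(I)` a
subgroup of prime order `P I` with `3 ≤ P I < 5` and `P I ∣ L`, and distinct exceptional
codewords have coprime subgroup orders, then `|C| ≤ ⌊(L + 2)/4⌋`. -/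
theorem stmt19 (L : ℕ) (hL : 2 ≤ L) [NeZero L]
    (C : Finset (Finset (ZMod L)))
    (hmem : ∀ I ∈ C, I.card = 3 ∧
      ∃ g : ZMod L, I = (Finset.range 3).image fun k : ℕ => (k : ZMod L) * g)
    (hdisj : ∀ I ∈ C, ∀ J ∈ C, I ≠ J → Disjoint (dstar I) (dstar J))
    (P : Finset (ZMod L) → ℕ)
    (hexc : ∀ I ∈ C, (dstar I).card < 4 →
      (∃ H : AddSubgroup (ZMod L),
        ((dstar I ∪ {0} : Finset (ZMod L)) : Set (ZMod L)) = (H : Set (ZMod L))) ∧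
      (dstar I ∪ {0}).card = P I ∧ (P I).Prime ∧ 3 ≤ P I ∧ P I < 5 ∧ P I ∣ L)
    (hPco : ∀ I ∈ C, ∀ J ∈ C, (dstar I).card < 4 → (dstar J).card < 4 → I ≠ J →
      Nat.Coprime (P I) (P J)) :
    C.card ≤ (L + 2) / 4 := by
  classical
  set E := C.filter (fun I => (dstar I).card < 4) with hE
  -- each exceptional codeword has P I = 3
  have hP3 : ∀ I ∈ E, P I = 3 := by
    intro I hI
    rw [hE, Finset.mem_filter] at hI
    obtain ⟨-, -, hp, h3, h5, -⟩ := hexc I hI.1 hI.2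
    interval_cases h : P I
    · rfl
    · norm_num at hp
  -- at most one exceptional codeword
  have hEcard : E.card ≤ 1 := by
    rw [Finset.card_le_one]
    intro I hI J hJ
    by_contra hne
    have hI' := hI; have hJ' := hJ
    rw [hE, Finset.mem_filter] at hI' hJ'
    have hco := hPco I hI'.1 J hJ'.1 hI'.2 hJ'.2 hne
    rw [hP3 I hI, hP3 J hJ] at hco
    simp [Nat.Coprime] at hco
  -- exceptional codewords have |dstar I| = 2
  have hEtwo : ∀ I ∈ E, (dstar I).card = 2 := by
    intro I hI
    have hI' := hI
    rw [hE, Finset.mem_filter] at hI'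
    obtain ⟨-, hcard, -, -, -, -⟩ := hexc I hI'.1 hI'.2
    rw [hP3 I hI] at hcard
    rw [Finset.card_union_of_disjoint (Finset.disjoint_singleton_right.mpr
      (zero_notMem_dstar I))] at hcard
    simpa using hcard
  -- difference sets are disjoint subsets of Z_L \ {0}
  have hsum : ∑ I ∈ C, (dstar I).card ≤ L - 1 := by
    rw [← Finset.card_biUnion (fun I hI J hJ hne => hdisj I hI J hJ hne)]
    calc (C.biUnion dstar).card ≤ (Finset.univ.erase (0 : ZMod L)).card := by
          apply Finset.card_le_card
          intro x hx
          simp only [Finset.mem_biUnion] at hx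
          obtain ⟨I, hI, hxI⟩ := hx
          rw [Finset.mem_erase]
          exact ⟨fun h => (h ▸ zero_notMem_dstar I) hxI, Finset.mem_univ x⟩
      _ = L - 1 := by
          rw [Finset.card_erase_of_mem (Finset.mem_univ _), Finset.card_univ, ZMod.card]
  -- lower bound on the sum
  have hsplit : ∑ I ∈ E, (dstar I).card + ∑ I ∈ C.filter (fun I => ¬ (dstar I).card < 4),
      (dstar I).card = ∑ I ∈ C, (dstar I).card := by
    rw [hE]; exact Finset.sum_filter_add_sum_filter_not C _ _
  have hEsum : ∑ I ∈ E, (dstar I).card = 2 * E.card := by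
    rw [Finset.sum_congr rfl hEtwo, Finset.sum_const, smul_eq_mul, mul_comm]
  have hNsum : 4 * (C.filter (fun I => ¬ (dstar I).card < 4)).card ≤
      ∑ I ∈ C.filter (fun I => ¬ (dstar I).card < 4), (dstar I).card := by
    calc 4 * (C.filter (fun I => ¬ (dstar I).card < 4)).card
        = ∑ _I ∈ C.filter (fun I => ¬ (dstar I).card < 4), 4 := by
          rw [Finset.sum_const, smul_eq_mul, mul_comm]
      _ ≤ _ := Finset.sum_le_sum (fun I hI => by
          rw [Finset.mem_filter] at hI; omega)
  have hfc : E.card + (C.filter (fun I => ¬ (dstar I).card < 4)).card = C.card := by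
    rw [hE]; exact Finset.card_filter_add_card_filter_not _
  have h4 : 4 * C.card ≤ L + 2 := by omega
  rw [Nat.le_div_iff_mul_le (by norm_num)]
  omega
end
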